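/- arXiv:1311.7065 — 2 statements merged into one kernel-verified Lean document; each statement's English description precedes it below -/
import Mathlib

section
/- Under the stated assumptions, the split-panel jackknife estimator satisfies E[β̃^J] = β·(1 − 1/(N·T)). -/
open MeasureTheory

/-- The two-way fixed-effects variance estimator computed on the subpanel with
individuals in `I` and time periods in `S`. -/
noncomputable def subPanelEst {Ω : Type*} {N T : ℕ} (Y : Fin N → Fin T → Ω → ℝ)
    (I : Finset (Fin N)) (S : Finset (Fin T)) (ω : Ω) : ℝ :=
  ((I.card * S.card : ℕ) : ℝ)⁻¹ * ∑ i ∈ I, ∑ t ∈ S,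
    (Y i t ω - ((S.card : ℕ) : ℝ)⁻¹ * ∑ s ∈ S, Y i s ω
      - ((I.card : ℕ) : ℝ)⁻¹ * ∑ j ∈ I, Y j t ω
      + ((I.card * S.card : ℕ) : ℝ)⁻¹ * ∑ j ∈ I, ∑ s ∈ S, Y j s ω) ^ 2

/-- The first half `{1,…,n}` of the index set `{1,…,2n}`. -/
def firstHalf (n : ℕ) : Finset (Fin (2 * n)) :=
  Finset.univ.filter fun i => (i : ℕ) < n

/-- The second half `{n+1,…,2n}` of the index set `{1,…,2n}`. -/
def secondHalf (n : ℕ) : Finset (Fin (2 * n)) :=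
  Finset.univ.filter fun i => n ≤ (i : ℕ)

/-! The double-demeaned residual of `Y` at `(i, t)` on a subpanel `I × S` is the linear
combination `∑_{j,s} (δ_{ji} - 1/|I|) (δ_{st} - 1/|S|) ε_{js}` of the errors: the centering
weights sum to zero, so they annihilate the additive fixed effects. For orthogonal errors of common
second moment `β` the expected square of such a combination is `β` times the sum of the squared
weights, which factors as `(1 - 1/|I|) (1 - 1/|S|)`. Hence `E β̂_{I,S} = β (1 - 1/|I|) (1 - 1/|S|)`,
and with `a = 1/N`, `b = 1/T` the jackknife combination has expectation
`β (3 (1 - a) (1 - b) - (1 - a) (1 - 2b) - (1 - 2a) (1 - b)) = β (1 - a b)`. -/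

open Finset

lemma card_firstHalf (n : ℕ) : (firstHalf n).card = n := by
  rw [firstHalf, Fin.card_filter_val_lt]
  omega

lemma card_secondHalf (n : ℕ) : (secondHalf n).card = n := by
  have hcompl : secondHalf n = (firstHalf n)ᶜ := by
    ext i
    simp [firstHalf, secondHalf]
  rw [hcompl, card_compl, card_firstHalf, Fintype.card_fin]
  omega

section CenteringWeight

variable {ι κ : Type*} [DecidableEq ι] [DecidableEq κ]

noncomputable def centeringWeight (K : Finset ι) (k j : ι) : ℝ :=
  (if j = k then 1 else 0) - (K.card : ℝ)⁻¹

variable {K : Finset ι} {k : ι}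

lemma sum_centeringWeight_mul (hk : k ∈ K) (g : ι → ℝ) :
    ∑ j ∈ K, centeringWeight K k j * g j = g k - (K.card : ℝ)⁻¹ * ∑ j ∈ K, g j := by
  simp only [centeringWeight, sub_mul, ite_mul, one_mul, zero_mul, sum_sub_distrib,
    sum_ite_eq' K k, hk, if_true, ← mul_sum]

lemma sum_centeringWeight (hk : k ∈ K) : ∑ j ∈ K, centeringWeight K k j = 0 := by
  have hK : (K.card : ℝ) ≠ 0 := by exact_mod_cast card_ne_zero_of_mem hk
  simpa [hK] using sum_centeringWeight_mul hk fun _ => 1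

lemma sum_centeringWeight_sq (hk : k ∈ K) :
    ∑ j ∈ K, centeringWeight K k j ^ 2 = 1 - (K.card : ℝ)⁻¹ := by
  simp only [sq]
  rw [sum_centeringWeight_mul hk, sum_centeringWeight hk]
  simp [centeringWeight]

variable {I : Finset ι} {S : Finset κ} {i : ι} {t : κ}

lemma sum_sum_centeringWeight_mul (hi : i ∈ I) (ht : t ∈ S) (f : ι → κ → ℝ) :
    ∑ j ∈ I, ∑ s ∈ S, centeringWeight I i j * centeringWeight S t s * f j s
      = f i t - (S.card : ℝ)⁻¹ * ∑ s ∈ S, f i s - (I.card : ℝ)⁻¹ * ∑ j ∈ I, f j t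
        + (I.card : ℝ)⁻¹ * (S.card : ℝ)⁻¹ * ∑ j ∈ I, ∑ s ∈ S, f j s := by
  simp only [mul_assoc, ← mul_sum, sum_centeringWeight_mul ht]
  rw [sum_centeringWeight_mul hi, sum_sub_distrib, ← mul_sum]
  ring

lemma sum_sum_centeringWeight_mul_add (hi : i ∈ I) (ht : t ∈ S) (a : ι → ℝ) (b : κ → ℝ) :
    ∑ j ∈ I, ∑ s ∈ S, centeringWeight I i j * centeringWeight S t s * (a j + b s) = 0 := by
  simp only [mul_add, sum_add_distrib, mul_right_comm _ _ (a _), mul_assoc _ _ (b _),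
    ← mul_sum, ← sum_mul, sum_centeringWeight hi, sum_centeringWeight ht, mul_zero, zero_mul,
    sum_const_zero, add_zero]

end CenteringWeight

section SecondMoments

variable {Ω ι : Type*} [MeasurableSpace Ω] {P : Measure Ω}

lemma integral_sq_sum_mul_of_orthogonal [DecidableEq ι] (U : Finset ι) (e : ι → Ω → ℝ)
    (a : ι → ℝ) (β : ℝ)
    (hL2 : ∀ p ∈ U, MemLp (e p) 2 P)
    (hvar : ∀ p ∈ U, ∫ ω, e p ω ^ 2 ∂P = β)
    (horth : ∀ p ∈ U, ∀ q ∈ U, p ≠ q → ∫ ω, e p ω * e q ω ∂P = 0) :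
    ∫ ω, (∑ p ∈ U, a p * e p ω) ^ 2 ∂P = β * ∑ p ∈ U, a p ^ 2 := by
  have hmoment : ∀ p ∈ U, ∀ q ∈ U, ∫ ω, e p ω * e q ω ∂P = if p = q then β else 0 := by
    intro p hp q hq
    split_ifs with hpq
    · simpa [hpq, sq] using hvar q hq
    · exact horth p hp q hq hpq
  have hint : ∀ p ∈ U, ∀ q ∈ U, Integrable (fun ω => a p * a q * (e p ω * e q ω)) P :=
    fun p hp q hq => ((hL2 p hp).integrable_mul (hL2 q hq)).const_mul _
  calc ∫ ω, (∑ p ∈ U, a p * e p ω) ^ 2 ∂P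
      = ∫ ω, ∑ p ∈ U, ∑ q ∈ U, a p * a q * (e p ω * e q ω) ∂P := by
        congr with ω
        rw [sq, sum_mul_sum]
        exact sum_congr rfl fun p _ => sum_congr rfl fun q _ => by ring
    _ = ∑ p ∈ U, ∑ q ∈ U, a p * a q * (if p = q then β else 0) := by
        rw [integral_finsetSum _ fun p hp => integrable_finsetSum _ (hint p hp)]
        refine sum_congr rfl fun p hp => ?_
        rw [integral_finsetSum _ (hint p hp)]
        exact sum_congr rfl fun q hq => by rw [integral_const_mul, hmoment p hp q hq]
    _ = β * ∑ p ∈ U, a p ^ 2 := by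
        simp only [mul_ite, mul_zero, sum_ite_eq, mul_sum]
        exact sum_congr rfl fun p hp => by rw [if_pos hp]; ring

lemma integrable_sq_sum_mul (U : Finset ι) (e : ι → Ω → ℝ) (a : ι → ℝ)
    (hL2 : ∀ p ∈ U, MemLp (e p) 2 P) :
    Integrable (fun ω => (∑ p ∈ U, a p * e p ω) ^ 2) P :=
  (memLp_finsetSum U fun p hp => (hL2 p hp).const_mul (a p)).integrable_sq

end SecondMoments

section TwoWayFixedEffects

variable {Ω : Type*} {N T : ℕ}
  {Y ε : Fin N → Fin T → Ω → ℝ} {α : Fin N → ℝ} {γ : Fin T → ℝ}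

lemma subPanelEst_eq_sum_sq (hY : ∀ i t ω, Y i t ω = α i + γ t + ε i t ω)
    (I : Finset (Fin N)) (S : Finset (Fin T)) (ω : Ω) :
    subPanelEst Y I S ω = ((I.card * S.card : ℕ) : ℝ)⁻¹ * ∑ i ∈ I, ∑ t ∈ S,
      (∑ p ∈ I ×ˢ S, centeringWeight I i p.1 * centeringWeight S t p.2 * ε p.1 p.2 ω) ^ 2 := by
  unfold subPanelEst
  congr 1
  refine sum_congr rfl fun i hi => sum_congr rfl fun t ht => ?_
  have hfixed : ∑ j ∈ I, ∑ s ∈ S, centeringWeight I i j * centeringWeight S t s * Y j s ω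
      = ∑ j ∈ I, ∑ s ∈ S, centeringWeight I i j * centeringWeight S t s * ε j s ω := by
    simp only [hY, mul_add _ (α _ + γ _), sum_add_distrib,
      sum_sum_centeringWeight_mul_add hi ht, zero_add]
  rw [sum_product, ← hfixed, sum_sum_centeringWeight_mul hi ht]
  push_cast
  ring

variable [MeasurableSpace Ω] {P : Measure Ω}

lemma integrable_subPanelEst (hY : ∀ i t ω, Y i t ω = α i + γ t + ε i t ω)
    (hL2 : ∀ i t, MemLp (ε i t) 2 P) (I : Finset (Fin N)) (S : Finset (Fin T)) :
    Integrable (subPanelEst Y I S) P := by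
  rw [funext (subPanelEst_eq_sum_sq hY I S)]
  exact (integrable_finsetSum _ fun i _ => integrable_finsetSum _ fun t _ =>
    integrable_sq_sum_mul _ (fun p : Fin N × Fin T => ε p.1 p.2)
      (fun p => centeringWeight I i p.1 * centeringWeight S t p.2)
      fun p _ => hL2 p.1 p.2).const_mul _

lemma integral_subPanelEst (β : ℝ) (hY : ∀ i t ω, Y i t ω = α i + γ t + ε i t ω)
    (hL2 : ∀ i t, MemLp (ε i t) 2 P) (hvar : ∀ i t, ∫ ω, ε i t ω ^ 2 ∂P = β)
    (horth : ∀ i j t s, (i, t) ≠ (j, s) → ∫ ω, ε i t ω * ε j s ω ∂P = 0)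
    {I : Finset (Fin N)} {S : Finset (Fin T)} (hI : I.Nonempty) (hS : S.Nonempty) :
    ∫ ω, subPanelEst Y I S ω ∂P = β * ((1 - (I.card : ℝ)⁻¹) * (1 - (S.card : ℝ)⁻¹)) := by
  have hterm : ∀ i ∈ I, ∀ t ∈ S, ∫ ω, (∑ p ∈ I ×ˢ S,
      centeringWeight I i p.1 * centeringWeight S t p.2 * ε p.1 p.2 ω) ^ 2 ∂P
        = β * ((1 - (I.card : ℝ)⁻¹) * (1 - (S.card : ℝ)⁻¹)) := by
    intro i hi t ht
    rw [integral_sq_sum_mul_of_orthogonal _ (fun p : Fin N × Fin T => ε p.1 p.2)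
      (fun p => centeringWeight I i p.1 * centeringWeight S t p.2) β (fun p _ => hL2 p.1 p.2)
      (fun p _ => hvar p.1 p.2)
      (fun p _ q _ hpq => horth p.1 q.1 p.2 q.2 hpq), sum_product]
    simp only [mul_pow, ← mul_sum, ← sum_mul, sum_centeringWeight_sq hi,
      sum_centeringWeight_sq ht]
  have hsq : ∀ i t, Integrable (fun ω => (∑ p ∈ I ×ˢ S,
      centeringWeight I i p.1 * centeringWeight S t p.2 * ε p.1 p.2 ω) ^ 2) P :=
    fun i t => integrable_sq_sum_mul _ (fun p : Fin N × Fin T => ε p.1 p.2)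
      (fun p => centeringWeight I i p.1 * centeringWeight S t p.2) fun p _ => hL2 p.1 p.2
  have hI0 : (I.card : ℝ) ≠ 0 := by exact_mod_cast hI.card_ne_zero
  have hS0 : (S.card : ℝ) ≠ 0 := by exact_mod_cast hS.card_ne_zero
  simp_rw [subPanelEst_eq_sum_sq hY I S]
  rw [integral_const_mul,
    integral_finsetSum _ fun i _ => integrable_finsetSum _ fun t _ => hsq i t]
  rw [sum_congr rfl fun i hi => (integral_finsetSum _ fun t _ => hsq i t).trans
    (sum_congr rfl (hterm i hi))]
  simp only [sum_const, nsmul_eq_mul]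
  push_cast
  field_simp

end TwoWayFixedEffects

theorem split_panel_jackknife_bias_general
    {Ω : Type*} [MeasurableSpace Ω] {P : Measure Ω}
    {n m : ℕ} (hn : 1 ≤ n) (hm : 1 ≤ m)
    (β : ℝ) (α : Fin (2 * n) → ℝ) (γ : Fin (2 * m) → ℝ)
    (Y : Fin (2 * n) → Fin (2 * m) → Ω → ℝ)
    (hL2 : ∀ (i : Fin (2 * n)) (t : Fin (2 * m)),
      MemLp (fun ω => Y i t ω - α i - γ t) 2 P)
    (hvar : ∀ (i : Fin (2 * n)) (t : Fin (2 * m)),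
      ∫ ω, (Y i t ω - α i - γ t) ^ 2 ∂P = β)
    (horth : ∀ (i j : Fin (2 * n)) (t s : Fin (2 * m)), (i, t) ≠ (j, s) →
      ∫ ω, (Y i t ω - α i - γ t) * (Y j s ω - α j - γ s) ∂P = 0) :
    ∫ ω, (3 * subPanelEst Y Finset.univ Finset.univ ω
        - (subPanelEst Y Finset.univ (firstHalf m) ω
            + subPanelEst Y Finset.univ (secondHalf m) ω) / 2
        - (subPanelEst Y (firstHalf n) Finset.univ ω
            + subPanelEst Y (secondHalf n) Finset.univ ω) / 2) ∂P
      = β * (1 - 1 / ((2 * (n : ℝ)) * (2 * (m : ℝ)))) := by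
  have hY : ∀ i t ω, Y i t ω = α i + γ t + (Y i t ω - α i - γ t) := fun _ _ _ => by ring
  have hint (I S) : Integrable (subPanelEst Y I S) P := integrable_subPanelEst hY hL2 I S
  have hE {I : Finset (Fin (2 * n))} {S : Finset (Fin (2 * m))}
      (hI : I.Nonempty) (hS : S.Nonempty) :=
    integral_subPanelEst β hY hL2 hvar horth hI hS
  have hhalves (k : ℕ) (hk : 1 ≤ k) :
      (univ : Finset (Fin (2 * k))).Nonempty ∧ (firstHalf k).Nonempty ∧ (secondHalf k).Nonempty :=
    ⟨card_pos.1 (by rw [card_univ, Fintype.card_fin]; omega),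
      card_pos.1 (by rw [card_firstHalf]; omega), card_pos.1 (by rw [card_secondHalf]; omega)⟩
  obtain ⟨hN, hN₁, hN₂⟩ := hhalves n hn
  obtain ⟨hT, hT₁, hT₂⟩ := hhalves m hm
  rw [integral_sub (by fun_prop) (by fun_prop), integral_sub (by fun_prop) (by fun_prop),
    integral_div, integral_div, integral_add (hint _ _) (hint _ _),
    integral_add (hint _ _) (hint _ _), integral_const_mul, hE hN hT, hE hN hT₁, hE hN hT₂,
    hE hN₁ hT, hE hN₂ hT]
  simp only [card_univ, Fintype.card_fin, card_firstHalf, card_secondHalf]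
  have hn0 : (n : ℝ) ≠ 0 := by positivity
  have hm0 : (m : ℝ) ≠ 0 := by positivity
  push_cast
  field_simp
  ring

/-- The split-panel jackknife estimator
`β̃^J = 3·β̂_{N,T} − β̃_{N,T/2} − β̃_{N/2,T}` satisfies `E[β̃^J] = β·(1 − 1/(N·T))`. -/
theorem split_panel_jackknife_bias
    {Ω : Type*} [MeasurableSpace Ω] {P : Measure Ω} [IsProbabilityMeasure P]
    {n m : ℕ} (hn : 1 ≤ n) (hm : 1 ≤ m)
    (β : ℝ) (α : Fin (2 * n) → ℝ) (γ : Fin (2 * m) → ℝ)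
    (Y : Fin (2 * n) → Fin (2 * m) → Ω → ℝ)
    (hL2 : ∀ (i : Fin (2 * n)) (t : Fin (2 * m)),
      MemLp (fun ω => Y i t ω - α i - γ t) 2 P)
    (hmean : ∀ (i : Fin (2 * n)) (t : Fin (2 * m)),
      ∫ ω, (Y i t ω - α i - γ t) ∂P = 0)
    (hvar : ∀ (i : Fin (2 * n)) (t : Fin (2 * m)),
      ∫ ω, (Y i t ω - α i - γ t) ^ 2 ∂P = β)
    (horth : ∀ (i j : Fin (2 * n)) (t s : Fin (2 * m)), (i, t) ≠ (j, s) →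
      ∫ ω, (Y i t ω - α i - γ t) * (Y j s ω - α j - γ s) ∂P = 0) :
    ∫ ω, (3 * subPanelEst Y Finset.univ Finset.univ ω
        - (subPanelEst Y Finset.univ (firstHalf m) ω
            + subPanelEst Y Finset.univ (secondHalf m) ω) / 2
        - (subPanelEst Y (firstHalf n) Finset.univ ω
            + subPanelEst Y (secondHalf n) Finset.univ ω) / 2) ∂P
      = β * (1 - 1 / ((2 * (n : ℝ)) * (2 * (m : ℝ)))) :=
  split_panel_jackknife_bias_general hn hm β α γ Y hL2 hvar horth
end

section
/- Let A and B be N×T real matrices, let (α^A, γ^A) solve the h-weighted normal equations for A, and let (α^B, γ^B) solve the h-weighted normal equations for B. Then 𝒜ᵀ H̄^{-1} ℬ = (NT)^{-3/2} · Σ_{i,t} h_{it}·(α^A_i + γ^A_t)·(α^B_i + γ^B_t). -/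
open Matrix

/-- The penalized expected incidental-parameter Hessian
`H̄ = (NT)^{-1/2}·(M + b·v vᵀ)` with `v = (1_N', −1_T')'`. -/
noncomputable def Hbar {N T : ℕ} (w : Fin N → Fin T → ℝ) (b : ℝ) :
    Matrix (Fin N ⊕ Fin T) (Fin N ⊕ Fin T) ℝ :=
  (Real.sqrt ((N : ℝ) * T))⁻¹ •
    (Matrix.fromBlocks (Matrix.diagonal fun i => ∑ t, w i t) (Matrix.of fun i t => w i t)
        (Matrix.of fun t i => w i t) (Matrix.diagonal fun t => ∑ i, w i t)
      + b • Matrix.vecMulVec (Sum.elim (fun _ => (1 : ℝ)) fun _ => -1)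
          (Sum.elim (fun _ => (1 : ℝ)) fun _ => -1))

/-- The vector `𝒳 = (NT)^{-1}·(X 1_T ; Xᵀ 1_N)` associated to an `N×T` matrix `X`. -/
noncomputable def scoreVec {N T : ℕ} (X : Matrix (Fin N) (Fin T) ℝ) :
    Fin N ⊕ Fin T → ℝ :=
  ((N : ℝ) * T)⁻¹ • Sum.elim (fun i => ∑ t, X i t) fun t => ∑ i, X i t

/-!
The additive effects `u = (α, γ)` are only determined up to `α ↦ α + c`, `γ ↦ γ - c`, i.e. up
to multiples of `v = (1, -1)`; choosing `c` so that `vᵀu = 0` kills the penalty term, and then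
`H̄ u = (NT)^{-1/2} M u`. Since `M u` is the vector of row and column sums of `h ⊙ (α + γ)`, the
normal equations turn it into `NT · ℬ`, so `H̄⁻¹ ℬ = (NT)^{-1/2} u`. Pairing with `𝒜` and using
the normal equations for `A` once more gives the weighted inner product of the two projections.
-/

section TwoWay

variable {m n : Type*} [Fintype m] [Fintype n]

def rowColSums (X : Matrix m n ℝ) : m ⊕ n → ℝ :=
  Sum.elim (fun i => ∑ t, X i t) fun t => ∑ i, X i t

def twoWayGram [DecidableEq m] [DecidableEq n] (w : m → n → ℝ) : Matrix (m ⊕ n) (m ⊕ n) ℝ :=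
  fromBlocks (diagonal fun i => ∑ t, w i t) (of fun i t => w i t)
    (of fun t i => w i t) (diagonal fun t => ∑ i, w i t)

def signVec : m ⊕ n → ℝ :=
  Sum.elim (fun _ => 1) fun _ => -1

theorem twoWayGram_mulVec_sumElim [DecidableEq m] [DecidableEq n] (w : m → n → ℝ)
    (α : m → ℝ) (γ : n → ℝ) :
    twoWayGram w *ᵥ Sum.elim α γ = rowColSums (of fun i t => w i t * (α i + γ t)) := by
  ext (i | t)
  all_goals simp [twoWayGram, rowColSums, mulVec, dotProduct, diagonal_apply, Finset.sum_mul,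
    mul_add, Finset.sum_add_distrib]

theorem rowColSums_dotProduct_sumElim (X : Matrix m n ℝ) (α : m → ℝ) (γ : n → ℝ) :
    rowColSums X ⬝ᵥ Sum.elim α γ = ∑ i, ∑ t, X i t * (α i + γ t) := by
  rw [rowColSums, sumElim_dotProduct_sumElim]
  simp only [dotProduct, Finset.sum_mul, mul_add, Finset.sum_add_distrib]
  rw [Finset.sum_comm (s := Finset.univ) (t := Finset.univ) (f := fun t i => X i t * γ t)]

theorem signVec_dotProduct_sumElim (α : m → ℝ) (γ : n → ℝ) :
    signVec ⬝ᵥ Sum.elim α γ = ∑ i, α i - ∑ t, γ t := by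
  simp [signVec, dotProduct, sub_eq_add_neg]

theorem exists_sum_add_eq_sum_sub (α : m → ℝ) (γ : n → ℝ) :
    ∃ c : ℝ, ∑ i, (α i + c) = ∑ t, (γ t - c) := by
  have hsum (c : ℝ) : ∑ i, (α i + c) - ∑ t, (γ t - c)
      = ∑ i, α i - ∑ t, γ t + (Fintype.card m + Fintype.card n) * c := by
    simp only [Finset.sum_add_distrib, Finset.sum_sub_distrib, Finset.sum_const,
      Finset.card_univ, nsmul_eq_mul]
    ring
  by_cases hcard : (Fintype.card m + Fintype.card n : ℝ) = 0
  · have hm : Fintype.card m = 0 := by norm_cast at hcard; omega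
    have hn : Fintype.card n = 0 := by norm_cast at hcard; omega
    refine ⟨0, ?_⟩
    rw [Fintype.card_eq_zero_iff] at hm hn
    simp
  · refine ⟨(∑ t, γ t - ∑ i, α i) / (Fintype.card m + Fintype.card n), ?_⟩
    rw [← sub_eq_zero, hsum, mul_div_cancel₀ _ hcard]
    ring

theorem rowColSums_eq_of_normal_equations {w : m → n → ℝ} {X : Matrix m n ℝ}
    {α : m → ℝ} {γ : n → ℝ}
    (hrow : ∀ i, ∑ t, w i t * (α i + γ t) = ∑ t, X i t)
    (hcol : ∀ t, ∑ i, w i t * (α i + γ t) = ∑ i, X i t) :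
    rowColSums (of fun i t => w i t * (α i + γ t)) = rowColSums X := by
  ext (i | t)
  · simp [rowColSums, hrow]
  · simp [rowColSums, hcol]

end TwoWay

theorem Hbar_eq {N T : ℕ} (w : Fin N → Fin T → ℝ) (b : ℝ) :
    Hbar w b = (Real.sqrt ((N : ℝ) * T))⁻¹ • (twoWayGram w + b • vecMulVec signVec signVec) :=
  rfl

theorem scoreVec_eq {N T : ℕ} (X : Matrix (Fin N) (Fin T) ℝ) :
    scoreVec X = ((N : ℝ) * T)⁻¹ • rowColSums X :=
  rfl

theorem Hbar_mulVec_sumElim {N T : ℕ} (w : Fin N → Fin T → ℝ) (b : ℝ)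
    {α : Fin N → ℝ} {γ : Fin T → ℝ} (hbal : ∑ i, α i = ∑ t, γ t) :
    Hbar w b *ᵥ Sum.elim α γ
      = (Real.sqrt ((N : ℝ) * T))⁻¹ • rowColSums (of fun i t => w i t * (α i + γ t)) := by
  rw [Hbar_eq, smul_mulVec, add_mulVec, smul_mulVec, vecMulVec_mulVec,
    signVec_dotProduct_sumElim, hbal, sub_self, twoWayGram_mulVec_sumElim]
  simp

theorem projection_formula_weighted_general {N T : ℕ}
    (w : Fin N → Fin T → ℝ) (b : ℝ)
    (hH : IsUnit (Hbar w b))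
    (A B : Matrix (Fin N) (Fin T) ℝ)
    (αA : Fin N → ℝ) (γA : Fin T → ℝ)
    (hA1 : ∀ i, ∑ t, w i t * (αA i + γA t) = ∑ t, A i t)
    (hA2 : ∀ t, ∑ i, w i t * (αA i + γA t) = ∑ i, A i t)
    (αB : Fin N → ℝ) (γB : Fin T → ℝ)
    (hB1 : ∀ i, ∑ t, w i t * (αB i + γB t) = ∑ t, B i t)
    (hB2 : ∀ t, ∑ i, w i t * (αB i + γB t) = ∑ i, B i t) :
    scoreVec A ⬝ᵥ (Hbar w b)⁻¹.mulVec (scoreVec B)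
      = (Real.sqrt ((N : ℝ) * T) ^ 3)⁻¹ *
          ∑ i, ∑ t, w i t * (αA i + γA t) * (αB i + γB t) := by
  let _ := hH.invertible
  have hNT : 0 ≤ (N : ℝ) * T := by positivity
  obtain ⟨c, hc⟩ := exists_sum_add_eq_sum_sub αB γB
  have hshift (i : Fin N) (t : Fin T) : αB i + c + (γB t - c) = αB i + γB t := by ring
  have hsolve : Hbar w b *ᵥ ((√((N : ℝ) * T))⁻¹ • Sum.elim (fun i => αB i + c) fun t => γB t - c)
      = scoreVec B := by
    simp only [mulVec_smul, Hbar_mulVec_sumElim w b hc, hshift,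
      rowColSums_eq_of_normal_equations hB1 hB2, smul_smul, ← mul_inv, Real.mul_self_sqrt hNT,
      scoreVec_eq]
  rw [inv_mulVec_eq_vec hsolve.symm, scoreVec_eq, smul_dotProduct, dotProduct_smul,
    ← rowColSums_eq_of_normal_equations hA1 hA2, rowColSums_dotProduct_sumElim, pow_succ,
    Real.sq_sqrt hNT, mul_inv]
  simp only [hshift, of_apply, smul_eq_mul]
  ring

/-- If `(α^A, γ^A)` and `(α^B, γ^B)` solve the `h`-weighted normal equations for `A` and
`B`, then `𝒜ᵀ H̄⁻¹ ℬ = (NT)^{-3/2}·Σ_{i,t} h_{it}·(α^A_i + γ^A_t)·(α^B_i + γ^B_t)`. -/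
theorem projection_formula_weighted {N T : ℕ} (hN : 0 < N) (hT : 0 < T)
    (w : Fin N → Fin T → ℝ) (hw : ∀ i t, 0 < w i t) (b : ℝ) (hb : 0 < b)
    (hH : IsUnit (Hbar w b))
    (A B : Matrix (Fin N) (Fin T) ℝ)
    (αA : Fin N → ℝ) (γA : Fin T → ℝ)
    (hA1 : ∀ i, ∑ t, w i t * (αA i + γA t) = ∑ t, A i t)
    (hA2 : ∀ t, ∑ i, w i t * (αA i + γA t) = ∑ i, A i t)
    (αB : Fin N → ℝ) (γB : Fin T → ℝ)
    (hB1 : ∀ i, ∑ t, w i t * (αB i + γB t) = ∑ t, B i t)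
    (hB2 : ∀ t, ∑ i, w i t * (αB i + γB t) = ∑ i, B i t) :
    scoreVec A ⬝ᵥ (Hbar w b)⁻¹.mulVec (scoreVec B)
      = (Real.sqrt ((N : ℝ) * T) ^ 3)⁻¹ *
          ∑ i, ∑ t, w i t * (αA i + γA t) * (αB i + γB t) :=
  projection_formula_weighted_general w b hH A B αA γA hA1 hA2 αB γB hB1 hB2
end
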